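/- For any τ > 0 and any W ∈ B(W^(0), τ): Σ_{l=1}^L ‖∇_{W_l} L_S(W)‖_F² ≤ L · M(τ)² · L_S(W). -/
import Mathlib


open MeasureTheory ProbabilityTheory Real
open scoped BigOperators ENNReal NNReal

noncomputable section

namespace Paper

/-- ReLU activation. -/
def relu (z : ℝ) : ℝ := max z 0

/-- Formal derivative of the ReLU: `σ'(z) = 1{z > 0}`. -/
def relu' (z : ℝ) : ℝ := if 0 < z then 1 else 0

/-- Cross-entropy loss `ℓ(z) = log(1 + exp(-z))`. -/
def xent (z : ℝ) : ℝ := Real.log (1 + Real.exp (-z))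

/-- Derivative of the cross-entropy loss: `ℓ'(z) = -1/(1+e^z)`. -/
def xent' (z : ℝ) : ℝ := -(1 / (1 + Real.exp z))

/-- `-ℓ'(z) = 1/(1+e^z)`. -/
def negXent' (z : ℝ) : ℝ := 1 / (1 + Real.exp z)

/-- Weight space for an `L`-layer network of width `m` on inputs of dimension `d`.
Every layer is stored as an `m × (m+d)` array; layer `0` only uses the block of the
first `d` columns, layers `1,…,L-2` the block of the first `m` columns, and layer
`L-1` the first row and first `m` columns. -/
abbrev Wts (L m d : ℕ) := Fin L → Fin m → Fin (m + d) → ℝ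

/-- Extension of the weights to arbitrary natural layer indices. -/
def extW (L m d : ℕ) (W : Wts L m d) : ℕ → Fin m → Fin (m + d) → ℝ :=
  fun l => if h : l < L then W ⟨l, h⟩ else fun _ _ => 0

def colD (m d : ℕ) (k : Fin d) : Fin (m + d) := Fin.castLE (Nat.le_add_left d m) k

def colM (m d : ℕ) (k : Fin m) : Fin (m + d) := Fin.castLE (Nat.le_add_right m d) k

/-- Pre-activations: `preact m d W x l` is the vector `W_l σ(W_{l-1} ⋯ σ(W_0 x) ⋯)`
(0-indexed layers). -/
def preact (m d : ℕ) (W : ℕ → Fin m → Fin (m + d) → ℝ) (x : Fin d → ℝ) : ℕ → Fin m → ℝ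
  | 0 => fun j => ∑ k : Fin d, W 0 j (colD m d k) * x k
  | l + 1 => fun j => ∑ k : Fin m, W (l + 1) j (colM m d k) * relu (preact m d W x l k)

/-- Network output `f_W(x) = √m · W_{L-1} σ( ⋯ σ(W_0 x) ⋯ )` (row `0` of the last layer). -/
def netOut (L m d : ℕ) (W : Wts L m d) (x : Fin d → ℝ) : ℝ :=
  Real.sqrt m * ∑ j : Fin m, ∑ k : Fin m,
    (if (j : ℕ) = 0 then
      extW L m d W (L - 1) j (colM m d k) * relu (preact m d (extW L m d W) x (L - 2) k)
    else 0)

/-- Backpropagated errors; `deltaAux L m d W x t` is the delta at pre-activation level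
`L - 2 - t`. -/
def deltaAux (L m d : ℕ) (W : ℕ → Fin m → Fin (m + d) → ℝ) (x : Fin d → ℝ) :
    ℕ → Fin m → ℝ
  | 0 => fun k =>
      Real.sqrt m * (∑ j : Fin m, if (j : ℕ) = 0 then W (L - 1) j (colM m d k) else 0) *
        relu' (preact m d W x (L - 2) k)
  | t + 1 => fun k =>
      relu' (preact m d W x (L - 2 - (t + 1)) k) *
        ∑ j : Fin m, W (L - 2 - t) j (colM m d k) * deltaAux L m d W x t j

/-- Delta at pre-activation level `l`. -/
def delta (L m d : ℕ) (W : ℕ → Fin m → Fin (m + d) → ℝ) (x : Fin d → ℝ) (l : ℕ) :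
    Fin m → ℝ :=
  deltaAux L m d W x (L - 2 - l)

/-- Formal chain-rule gradient `∇_{W_l} f_W(x)` of the network output w.r.t. layer `l`. -/
def gradLayer (L m d : ℕ) (W : Wts L m d) (x : Fin d → ℝ) (l : ℕ) :
    Fin m → Fin (m + d) → ℝ :=
  fun j c =>
    if l = L - 1 then
      (if h : (j : ℕ) = 0 ∧ (c : ℕ) < m then
        Real.sqrt m * relu (preact m d (extW L m d W) x (L - 2) ⟨(c : ℕ), h.2⟩)
      else 0)
    else if l = 0 then
      delta L m d (extW L m d W) x 0 j * (if h : (c : ℕ) < d then x ⟨(c : ℕ), h⟩ else 0)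
    else
      delta L m d (extW L m d W) x l j *
        (if h : (c : ℕ) < m then relu (preact m d (extW L m d W) x (l - 1) ⟨(c : ℕ), h⟩)
         else 0)

/-- Entrywise inner product of two layer matrices. -/
def inner2 (m d : ℕ) (A B : Fin m → Fin (m + d) → ℝ) : ℝ :=
  ∑ j : Fin m, ∑ c : Fin (m + d), A j c * B j c

/-- `⟨∇ f_W(x), V⟩ = Σ_l ⟨∇_{W_l} f_W(x), V_l⟩`. -/
def gradInner (L m d : ℕ) (W : Wts L m d) (x : Fin d → ℝ) (V : Wts L m d) : ℝ :=
  ∑ l : Fin L, inner2 m d (gradLayer L m d W x (l : ℕ)) (V l)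

/-- NTRF model `F_{W⁰,W}(x) = f_{W⁰}(x) + ⟨∇f_{W⁰}(x), W - W⁰⟩`. -/
def ntrf (L m d : ℕ) (W0 W : Wts L m d) (x : Fin d → ℝ) : ℝ :=
  netOut L m d W0 x + gradInner L m d W0 x (W - W0)

/-- Number of rows actually used by layer `l`. -/
def rowsOf (L m : ℕ) (l : ℕ) : ℕ := if l = L - 1 then 1 else m

/-- Number of columns actually used by layer `l`. -/
def colsOf (m d : ℕ) (l : ℕ) : ℕ := if l = 0 then d else m

/-- Squared Frobenius norm of the relevant block of layer `l`. -/
def layerNormSq (L m d : ℕ) (l : ℕ) (A : Fin m → Fin (m + d) → ℝ) : ℝ :=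
  ∑ j : Fin m, ∑ c : Fin (m + d),
    if (j : ℕ) < rowsOf L m l ∧ (c : ℕ) < colsOf m d l then (A j c) ^ 2 else 0

/-- `W ∈ B(W⁰, τ)`, i.e. `max_l ‖W_l − W⁰_l‖_F ≤ τ`. -/
def inBall (L m d : ℕ) (W0 W : Wts L m d) (τ : ℝ) : Prop :=
  ∀ l : Fin L, Real.sqrt (layerNormSq L m d (l : ℕ) (W l - W0 l)) ≤ τ

/-- `‖W − W'‖_F²` summed over all layers. -/
def distSq (L m d : ℕ) (W W' : Wts L m d) : ℝ :=
  ∑ l : Fin L, layerNormSq L m d (l : ℕ) (W l - W' l)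

/-- Loss on a single example. -/
def sampleLoss (L m d : ℕ) (W : Wts L m d) (x : Fin d → ℝ) (y : ℝ) : ℝ :=
  xent (y * netOut L m d W x)

/-- Empirical training loss `L_S(W)`. -/
def trainLoss (L m d n : ℕ) (X : Fin n → Fin d → ℝ) (Y : Fin n → ℝ) (W : Wts L m d) : ℝ :=
  (1 / (n : ℝ)) * ∑ i : Fin n, sampleLoss L m d W (X i) (Y i)

/-- Formal gradient of the single-sample loss w.r.t. layer `l`. -/
def sampleLossGrad (L m d : ℕ) (x : Fin d → ℝ) (y : ℝ) (W : Wts L m d) (l : ℕ) :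
    Fin m → Fin (m + d) → ℝ :=
  fun j c => xent' (y * netOut L m d W x) * y * gradLayer L m d W x l j c

/-- Formal gradient of the empirical loss w.r.t. layer `l`. -/
def trainLossGrad (L m d n : ℕ) (X : Fin n → Fin d → ℝ) (Y : Fin n → ℝ)
    (W : Wts L m d) (l : ℕ) : Fin m → Fin (m + d) → ℝ :=
  fun j c => (1 / (n : ℝ)) * ∑ i : Fin n, sampleLossGrad L m d (X i) (Y i) W l j c

/-- Gradient descent iterates with step size `η` started at `W0`. -/
def gdIter (L m d n : ℕ) (X : Fin n → Fin d → ℝ) (Y : Fin n → ℝ) (η : ℝ)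
    (W0 : Wts L m d) : ℕ → Wts L m d
  | 0 => W0
  | t + 1 => fun l j c =>
      gdIter L m d n X Y η W0 t l j c -
        η * trainLossGrad L m d n X Y (gdIter L m d n X Y η W0 t) (l : ℕ) j c

/-- Online SGD iterates: step `i → i+1` uses the example `S i`. -/
def sgdIter (L m d : ℕ) (S : ℕ → (Fin d → ℝ) × ℝ) (η : ℝ) (W0 : Wts L m d) :
    ℕ → Wts L m d
  | 0 => W0
  | i + 1 => fun l j c =>
      sgdIter L m d S η W0 i l j c -
        η * sampleLossGrad L m d (S i).1 (S i).2 (sgdIter L m d S η W0 i) (l : ℕ) j c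

/-- Extension of a finite sample to a stream. -/
def extS (n d : ℕ) (S : Fin n → (Fin d → ℝ) × ℝ) : ℕ → (Fin d → ℝ) × ℝ :=
  fun i => if h : i < n then S ⟨i, h⟩ else (fun _ => 0, 1)

/-- Linear approximation error `ε_app(τ)` around `W0`. -/
def epsApp (L m d n : ℕ) (X : Fin n → Fin d → ℝ) (W0 : Wts L m d) (τ : ℝ) : ℝ :=
  sSup { e : ℝ | ∃ (i : Fin n) (W W' : Wts L m d),
    inBall L m d W0 W τ ∧ inBall L m d W0 W' τ ∧
    e = |netOut L m d W' (X i) - netOut L m d W (X i) -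
          gradInner L m d W (X i) (W' - W)| }

/-- Gradient norm bound `M(τ)` around `W0`. -/
def gradBound (L m d n : ℕ) (X : Fin n → Fin d → ℝ) (W0 : Wts L m d) (τ : ℝ) : ℝ :=
  sSup { e : ℝ | ∃ (i : Fin n) (l : Fin L) (W : Wts L m d),
    inBall L m d W0 W τ ∧
    e = Real.sqrt (layerNormSq L m d (l : ℕ) (gradLayer L m d W (X i) (l : ℕ))) }

/-- Average cross-entropy loss of the NTRF model `F_{W0,W}` on the training set. -/
def ntrfLoss (L m d n : ℕ) (X : Fin n → Fin d → ℝ) (Y : Fin n → ℝ)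
    (W0 W : Wts L m d) : ℝ :=
  (1 / (n : ℝ)) * ∑ i : Fin n, xent (Y i * ntrf L m d W0 W (X i))

/-- `ε_NTRF`: the minimum training loss achievable by the NTRF class `F(W0, R)`. -/
def epsNTRF (L m d n : ℕ) (X : Fin n → Fin d → ℝ) (Y : Fin n → ℝ)
    (W0 : Wts L m d) (R : ℝ) : ℝ :=
  sInf { e : ℝ | ∃ W : Wts L m d,
    inBall L m d W0 W (R / Real.sqrt m) ∧ e = ntrfLoss L m d n X Y W0 W }

/-- Variance of the Gaussian initialization at layer `l`. -/
def initVar (L m : ℕ) (l : ℕ) : ℝ≥0 := if l = L - 1 then (m : ℝ≥0)⁻¹ else 2 * (m : ℝ≥0)⁻¹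

/-- The Gaussian random initialization: entries of `W_0,…,W_{L-2}` are i.i.d.
`N(0, 2/m)` and entries of `W_{L-1}` are i.i.d. `N(0, 1/m)`. -/
def initMeasure (L m d : ℕ) : Measure (Wts L m d) :=
  Measure.pi fun l : Fin L =>
    Measure.pi fun _ : Fin m =>
      Measure.pi fun _ : Fin (m + d) => gaussianReal 0 (initVar L m (l : ℕ))

/-- Expected 0-1 error `L_D^{0-1}(W)`. -/
def zeroOneLoss (L m d : ℕ) (D : Measure ((Fin d → ℝ) × ℝ)) (W : Wts L m d) : ℝ :=
  (D {p | p.2 * netOut L m d W p.1 < 0}).toReal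

end Paper

open Paper Finset


lemma aux_negXent'_nonneg (z : ℝ) : 0 ≤ negXent' z := by
  unfold negXent'; positivity

lemma aux_negXent'_le_one (z : ℝ) : negXent' z ≤ 1 := by
  unfold negXent'
  rw [div_le_one (by positivity)]
  nlinarith [Real.exp_pos z]

lemma aux_negXent'_le_xent (z : ℝ) : negXent' z ≤ xent z := by
  have h1 : Real.exp (-z) * Real.exp z = 1 := by rw [← Real.exp_add]; simp
  have hu : (0:ℝ) < 1 + Real.exp (-z) := by positivity
  have hz : (0:ℝ) < 1 + Real.exp z := by positivity
  have h2 := Real.log_le_sub_one_of_pos (x := (1 + Real.exp (-z))⁻¹) (by positivity)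
  rw [Real.log_inv] at h2
  have heq : 1 - (1 + Real.exp (-z))⁻¹ = 1 / (1 + Real.exp z) := by
    field_simp
    nlinarith [h1]
  unfold negXent' xent
  linarith [heq]

lemma aux_abs_xent' (z : ℝ) : |xent' z| = negXent' z := by
  unfold xent' negXent'
  rw [abs_neg, abs_of_nonneg (by positivity)]

lemma aux_abs_relu (z : ℝ) : |relu z| ≤ |z| := by
  rw [relu, abs_of_nonneg (le_max_right z 0)]
  exact max_le (le_abs_self z) (abs_nonneg z)

lemma aux_relu'_nonneg (z : ℝ) : 0 ≤ relu' z := by unfold relu'; split <;> norm_num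

lemma aux_relu'_le_one (z : ℝ) : relu' z ≤ 1 := by unfold relu'; split <;> norm_num


lemma aux_preact_bound (L m d : ℕ) (W : ℕ → Fin m → Fin (m + d) → ℝ) (x : Fin d → ℝ)
    (C : ℝ) (hC : 0 ≤ C) (hx : ∀ k, |x k| ≤ 1)
    (h0 : ∀ (j : Fin m) (k : Fin d), |W 0 j (colD m d k)| ≤ C)
    (hmid : ∀ l : ℕ, 1 ≤ l → l ≤ L - 2 → ∀ (j k : Fin m), |W l j (colM m d k)| ≤ C) :
    ∀ t, t ≤ L - 2 → ∀ j, |preact m d W x t j| ≤ (((m : ℝ) + d) * C + 1) ^ (t + 1) := by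
  have hmC : (0:ℝ) ≤ (m:ℝ) * C := by positivity
  have hdC : (0:ℝ) ≤ (d:ℝ) * C := by positivity
  have hQ1 : (1:ℝ) ≤ ((m : ℝ) + d) * C + 1 := by nlinarith
  intro t
  induction t with
  | zero =>
    intro _ j
    calc |preact m d W x 0 j| ≤ ∑ k : Fin d, |W 0 j (colD m d k) * x k| := by
          simp only [preact]; exact Finset.abs_sum_le_sum_abs _ _
      _ ≤ ∑ _k : Fin d, C * 1 := Finset.sum_le_sum (fun k _ => by
          rw [abs_mul]; exact mul_le_mul (h0 j k) (hx k) (abs_nonneg _) hC)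
      _ = (d : ℝ) * C := by simp [mul_comm]
      _ ≤ (((m : ℝ) + d) * C + 1) ^ (0 + 1) := by rw [pow_one]; nlinarith
  | succ t ih =>
    intro ht j
    have ht' : t ≤ L - 2 := by omega
    calc |preact m d W x (t + 1) j|
        ≤ ∑ k : Fin m, |W (t + 1) j (colM m d k) * relu (preact m d W x t k)| := by
          simp only [preact]; exact Finset.abs_sum_le_sum_abs _ _
      _ ≤ ∑ _k : Fin m, C * (((m : ℝ) + d) * C + 1) ^ (t + 1) := Finset.sum_le_sum (fun k _ => by
          rw [abs_mul]
          exact mul_le_mul (hmid (t+1) (by omega) ht j k)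
            ((aux_abs_relu _).trans (ih ht' k)) (abs_nonneg _) hC)
      _ = (m : ℝ) * C * (((m : ℝ) + d) * C + 1) ^ (t + 1) := by
          simp [mul_comm, mul_assoc, mul_left_comm]
      _ ≤ (((m : ℝ) + d) * C + 1) ^ (t + 1 + 1) := by
          have hp : (0:ℝ) ≤ (((m : ℝ) + d) * C + 1) ^ (t + 1) := by positivity
          have h1 : (m:ℝ) * C ≤ ((m : ℝ) + d) * C + 1 := by nlinarith
          calc (m : ℝ) * C * (((m : ℝ) + d) * C + 1) ^ (t + 1)
              ≤ (((m : ℝ) + d) * C + 1) * (((m : ℝ) + d) * C + 1) ^ (t + 1) :=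
                mul_le_mul_of_nonneg_right h1 hp
            _ = (((m : ℝ) + d) * C + 1) ^ (t + 1 + 1) := by rw [pow_succ]; ring

lemma aux_deltaAux_bound (L m d : ℕ) (hm : 0 < m) (W : ℕ → Fin m → Fin (m + d) → ℝ)
    (x : Fin d → ℝ) (C : ℝ) (hC : 0 ≤ C)
    (hmid : ∀ l : ℕ, 1 ≤ l → l ≤ L - 2 → ∀ (j k : Fin m), |W l j (colM m d k)| ≤ C)
    (hlast : ∀ (j : Fin m), (j : ℕ) = 0 → ∀ k : Fin m, |W (L - 1) j (colM m d k)| ≤ C) :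
    ∀ t, t ≤ L - 2 → ∀ k, |deltaAux L m d W x t k| ≤
      Real.sqrt m * C * ((m : ℝ) * C + 1) ^ t := by
  have hsm : (0:ℝ) ≤ Real.sqrt m := Real.sqrt_nonneg m
  have hR1 : (1:ℝ) ≤ (m : ℝ) * C + 1 := by
    have : (0:ℝ) ≤ (m:ℝ) * C := by positivity
    linarith
  intro t
  induction t with
  | zero =>
    intro _ k
    have hS : (∑ j : Fin m, if (j : ℕ) = 0 then W (L - 1) j (colM m d k) else 0) =
        W (L - 1) ⟨0, hm⟩ (colM m d k) := by
      rw [Finset.sum_eq_single (⟨0, hm⟩ : Fin m)]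
      · simp
      · intro b _ hb
        rw [if_neg]
        intro h; exact hb (Fin.ext h)
      · intro h; exact absurd (Finset.mem_univ _) h
    simp only [deltaAux, hS, pow_zero, mul_one]
    rw [abs_mul, abs_mul]
    calc |Real.sqrt m| * |W (L-1) ⟨0, hm⟩ (colM m d k)| * |relu' (preact m d W x (L - 2) k)|
        ≤ Real.sqrt m * C * 1 := by
          apply mul_le_mul _ _ (abs_nonneg _) (by positivity)
          · exact mul_le_mul (le_of_eq (abs_of_nonneg hsm)) (hlast _ rfl k) (abs_nonneg _) hsm
          · rw [abs_of_nonneg (aux_relu'_nonneg _)]; exact aux_relu'_le_one _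
      _ = Real.sqrt m * C := by ring
  | succ t ih =>
    intro ht k
    have ht' : t ≤ L - 2 := by omega
    simp only [deltaAux]
    rw [abs_mul]
    calc |relu' (preact m d W x (L - 2 - (t+1)) k)| *
          |∑ j : Fin m, W (L - 2 - t) j (colM m d k) * deltaAux L m d W x t j|
        ≤ 1 * ∑ j : Fin m, |W (L - 2 - t) j (colM m d k) * deltaAux L m d W x t j| := by
          apply mul_le_mul
          · rw [abs_of_nonneg (aux_relu'_nonneg _)]; exact aux_relu'_le_one _
          · exact Finset.abs_sum_le_sum_abs _ _
          · exact abs_nonneg _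
          · norm_num
      _ = ∑ j : Fin m, |W (L - 2 - t) j (colM m d k) * deltaAux L m d W x t j| := one_mul _
      _ ≤ ∑ _j : Fin m, C * (Real.sqrt m * C * ((m : ℝ) * C + 1) ^ t) :=
          Finset.sum_le_sum (fun j _ => by
            rw [abs_mul]
            exact mul_le_mul (hmid (L - 2 - t) (by omega) (by omega) _ _) (ih ht' j)
              (abs_nonneg _) hC)
      _ = (m : ℝ) * C * (Real.sqrt m * C * ((m : ℝ) * C + 1) ^ t) := by
          simp [mul_comm, mul_assoc, mul_left_comm]
      _ ≤ Real.sqrt m * C * ((m : ℝ) * C + 1) ^ (t + 1) := by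
          rw [pow_succ]
          nlinarith [pow_nonneg (le_trans zero_le_one hR1) t,
            mul_nonneg (mul_nonneg hsm hC) (pow_nonneg (le_trans zero_le_one hR1) t)]



lemma aux_lns_nonneg (L m d : ℕ) (l : ℕ) (A : Fin m → Fin (m + d) → ℝ) :
    0 ≤ layerNormSq L m d l A := by
  unfold layerNormSq
  apply Finset.sum_nonneg; intro j _
  apply Finset.sum_nonneg; intro c _
  split
  · positivity
  · exact le_refl 0

lemma aux_lns_le (L m d : ℕ) (l : ℕ) (A : Fin m → Fin (m + d) → ℝ) (E : ℝ) (_hE : 0 ≤ E)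
    (h : ∀ j c, |A j c| ≤ E) : layerNormSq L m d l A ≤ (m : ℝ) * ((m : ℝ) + d) * E ^ 2 := by
  unfold layerNormSq
  calc (∑ j : Fin m, ∑ c : Fin (m + d),
        if (j : ℕ) < rowsOf L m l ∧ (c : ℕ) < colsOf m d l then (A j c) ^ 2 else 0)
      ≤ ∑ _j : Fin m, ∑ _c : Fin (m + d), E ^ 2 := by
        apply Finset.sum_le_sum; intro j _
        apply Finset.sum_le_sum; intro c _
        split
        · calc (A j c) ^ 2 = |A j c| ^ 2 := (sq_abs _).symm
            _ ≤ E ^ 2 := pow_le_pow_left₀ (abs_nonneg _) (h j c) 2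
        · positivity
    _ = (m : ℝ) * ((m : ℝ) + d) * E ^ 2 := by
        simp [Finset.sum_const, Finset.card_univ, nsmul_eq_mul]
        ring

lemma aux_entry_bound (L m d : ℕ) (hL : 2 ≤ L) (hm : 1 ≤ m) (hd : 1 ≤ d)
    (W0 : Wts L m d) (τ : ℝ) (hτ : 0 < τ) :
    ∃ E : ℝ, 0 ≤ E ∧ ∀ (W : Wts L m d), inBall L m d W0 W τ →
      ∀ (x : Fin d → ℝ), (∀ k, |x k| ≤ 1) →
      ∀ l : ℕ, l < L → ∀ j c, |gradLayer L m d W x l j c| ≤ E := by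
  obtain ⟨B0, hB0⟩ := Finite.exists_le
    (fun p : Fin L × Fin m × Fin (m + d) => |W0 p.1 p.2.1 p.2.2|)
  have hB0' : ∀ l j c, |W0 l j c| ≤ B0 := fun l j c => hB0 (l, j, c)
  have hB0nn : 0 ≤ B0 :=
    le_trans (abs_nonneg _) (hB0' ⟨0, by omega⟩ ⟨0, hm⟩ ⟨0, by omega⟩)
  set C := B0 + τ with hCdef
  have hC : 0 ≤ C := by simp only [hCdef]; linarith
  set Q := ((m : ℝ) + d) * C + 1 with hQdef
  set R := (m : ℝ) * C + 1 with hRdef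
  set K := Real.sqrt m * C * R ^ (L - 2) with hKdef
  have hmC : (0:ℝ) ≤ (m:ℝ) * C := by positivity
  have hQ1 : (1:ℝ) ≤ Q := by
    have : (0:ℝ) ≤ ((m : ℝ) + d) * C := by positivity
    simp only [hQdef]; linarith
  have hR1 : (1:ℝ) ≤ R := by simp only [hRdef]; linarith
  have hsm : (0:ℝ) ≤ Real.sqrt m := Real.sqrt_nonneg m
  have hK0 : 0 ≤ K := by
    simp only [hKdef]
    have : (0:ℝ) ≤ R ^ (L - 2) := by positivity
    positivity
  have hP1 : (1:ℝ) ≤ Q ^ (L - 1) := by simpa using pow_le_pow_right₀ hQ1 (Nat.zero_le (L - 1))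
  refine ⟨Real.sqrt m * Q ^ (L - 1) + K * Q ^ (L - 1) + K, ?_, ?_⟩
  · have h1 : (0:ℝ) ≤ Real.sqrt m * Q ^ (L - 1) := by positivity
    have h2 : (0:ℝ) ≤ K * Q ^ (L - 1) := mul_nonneg hK0 (by positivity)
    linarith
  intro W hWb x hx l hlL j c
  -- block entry bound
  have hblock : ∀ (l' : ℕ) (h : l' < L) (j : Fin m) (c : Fin (m + d)),
      (j : ℕ) < rowsOf L m l' → (c : ℕ) < colsOf m d l' → |W ⟨l', h⟩ j c| ≤ C := by
    intro l' h j c hj hc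
    have h1 := hWb ⟨l', h⟩
    have h2 : (W ⟨l', h⟩ j c - W0 ⟨l', h⟩ j c) ^ 2 ≤
        layerNormSq L m d l' (W ⟨l', h⟩ - W0 ⟨l', h⟩) := by
      unfold layerNormSq
      have hterm : (W ⟨l', h⟩ j c - W0 ⟨l', h⟩ j c) ^ 2 =
          if (j : ℕ) < rowsOf L m l' ∧ (c : ℕ) < colsOf m d l' then
            ((W ⟨l', h⟩ - W0 ⟨l', h⟩) j c) ^ 2 else 0 := by
        rw [if_pos ⟨hj, hc⟩]; simp [Pi.sub_apply]
      rw [hterm]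
      have hrow : (if (j : ℕ) < rowsOf L m l' ∧ (c : ℕ) < colsOf m d l' then
            ((W ⟨l', h⟩ - W0 ⟨l', h⟩) j c) ^ 2 else 0) ≤
          ∑ c' : Fin (m + d), if (j : ℕ) < rowsOf L m l' ∧ (c' : ℕ) < colsOf m d l' then
            ((W ⟨l', h⟩ - W0 ⟨l', h⟩) j c') ^ 2 else 0 := by
        apply Finset.single_le_sum (f := fun c' : Fin (m + d) =>
          if (j : ℕ) < rowsOf L m l' ∧ (c' : ℕ) < colsOf m d l' then
            ((W ⟨l', h⟩ - W0 ⟨l', h⟩) j c') ^ 2 else 0)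
          (fun c' _ => by positivity) (Finset.mem_univ c)
      refine le_trans hrow ?_
      apply Finset.single_le_sum (f := fun j' : Fin m =>
        ∑ c' : Fin (m + d), if (j' : ℕ) < rowsOf L m l' ∧ (c' : ℕ) < colsOf m d l' then
          ((W ⟨l', h⟩ - W0 ⟨l', h⟩) j' c') ^ 2 else 0)
        (fun j' _ => Finset.sum_nonneg (fun c' _ => by positivity))
        (Finset.mem_univ j)
    have h3 : |W ⟨l', h⟩ j c - W0 ⟨l', h⟩ j c| ≤ τ := by
      rw [← Real.sqrt_sq_eq_abs]
      exact le_trans (Real.sqrt_le_sqrt h2) h1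
    calc |W ⟨l', h⟩ j c| = |(W ⟨l', h⟩ j c - W0 ⟨l', h⟩ j c) + W0 ⟨l', h⟩ j c| := by ring_nf
      _ ≤ |W ⟨l', h⟩ j c - W0 ⟨l', h⟩ j c| + |W0 ⟨l', h⟩ j c| := abs_add_le _ _
      _ ≤ τ + B0 := add_le_add h3 (hB0' _ _ _)
      _ = C := by simp only [hCdef]; ring
  have hLm1 : L - 1 ≠ 0 := by omega
  have h0W : ∀ (j : Fin m) (k : Fin d), |extW L m d W 0 j (colD m d k)| ≤ C := by
    intro j k
    have h0L : 0 < L := by omega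
    have he : extW L m d W 0 = W ⟨0, h0L⟩ := by simp [extW, h0L]
    rw [he]
    apply hblock 0 h0L
    · rw [rowsOf, if_neg (by omega)]; exact j.isLt
    · rw [colsOf, if_pos rfl]
      simp only [colD, Fin.coe_castLE]
      exact k.isLt
  have hmidW : ∀ l' : ℕ, 1 ≤ l' → l' ≤ L - 2 →
      ∀ (j k : Fin m), |extW L m d W l' j (colM m d k)| ≤ C := by
    intro l' h1 h2 j k
    have hl'L : l' < L := by omega
    have he : extW L m d W l' = W ⟨l', hl'L⟩ := by simp [extW, hl'L]
    rw [he]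
    apply hblock l' hl'L
    · rw [rowsOf, if_neg (by omega)]; exact j.isLt
    · rw [colsOf, if_neg (by omega)]
      simp only [colM, Fin.coe_castLE]
      exact k.isLt
  have hlastW : ∀ (j : Fin m), (j : ℕ) = 0 →
      ∀ k : Fin m, |extW L m d W (L - 1) j (colM m d k)| ≤ C := by
    intro j hj k
    have hl'L : L - 1 < L := by omega
    have he : extW L m d W (L - 1) = W ⟨L - 1, hl'L⟩ := by simp [extW, hl'L]
    rw [he]
    apply hblock (L - 1) hl'L
    · rw [rowsOf, if_pos rfl, hj]; omega
    · rw [colsOf, if_neg hLm1]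
      simp only [colM, Fin.coe_castLE]
      exact k.isLt
  have hpre := aux_preact_bound L m d (extW L m d W) x C hC hx h0W hmidW
  have hdel := aux_deltaAux_bound L m d hm (extW L m d W) x C hC hmidW hlastW
  by_cases hl1 : l = L - 1
  · simp only [gradLayer, if_pos hl1]
    split
    · rename_i hcond
      rw [abs_mul, abs_of_nonneg hsm]
      have := (aux_abs_relu _).trans (hpre (L - 2) le_rfl ⟨(c : ℕ), hcond.2⟩)
      have hexp : L - 2 + 1 = L - 1 := by omega
      rw [hexp] at this
      have h4 : Real.sqrt m * |relu (preact m d (extW L m d W) x (L - 2) ⟨(c : ℕ), hcond.2⟩)|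
          ≤ Real.sqrt m * Q ^ (L - 1) := mul_le_mul_of_nonneg_left this hsm
      have h5 : (0:ℝ) ≤ K * Q ^ (L - 1) := mul_nonneg hK0 (by positivity)
      linarith
    · simp only [abs_zero]
      have h1 : (0:ℝ) ≤ Real.sqrt m * Q ^ (L - 1) := by positivity
      have h2 : (0:ℝ) ≤ K * Q ^ (L - 1) := mul_nonneg hK0 (by positivity)
      linarith
  · by_cases hl0 : l = 0
    · subst hl0
      simp only [gradLayer, if_neg hl1, eq_self_iff_true, if_true]
      rw [abs_mul]
      have hd1 : |delta L m d (extW L m d W) x 0 j| ≤ K := by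
        unfold delta
        rw [Nat.sub_zero]
        exact hdel (L - 2) le_rfl j
      have hd2 : |(if h : (c : ℕ) < d then x ⟨(c : ℕ), h⟩ else 0)| ≤ 1 := by
        split
        · exact hx _
        · simp
      calc |delta L m d (extW L m d W) x 0 j| * |(if h : (c : ℕ) < d then x ⟨(c : ℕ), h⟩ else 0)|
          ≤ K * 1 := mul_le_mul hd1 hd2 (abs_nonneg _) hK0
        _ ≤ Real.sqrt m * Q ^ (L - 1) + K * Q ^ (L - 1) + K := by
          have h1 : (0:ℝ) ≤ Real.sqrt m * Q ^ (L - 1) := by positivity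
          have h2 : (0:ℝ) ≤ K * Q ^ (L - 1) := mul_nonneg hK0 (by positivity)
          linarith
    · simp only [gradLayer, if_neg hl1, if_neg hl0]
      rw [abs_mul]
      have hl2 : l ≤ L - 2 := by omega
      have hd1 : |delta L m d (extW L m d W) x l j| ≤ K := by
        unfold delta
        calc |deltaAux L m d (extW L m d W) x (L - 2 - l) j|
            ≤ Real.sqrt m * C * R ^ (L - 2 - l) := hdel (L - 2 - l) (by omega) j
          _ ≤ K := by
            simp only [hKdef]
            exact mul_le_mul_of_nonneg_left (pow_le_pow_right₀ hR1 (by omega))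
              (mul_nonneg hsm hC)
      have hd2 : |(if h : (c : ℕ) < m then
          relu (preact m d (extW L m d W) x (l - 1) ⟨(c : ℕ), h⟩) else 0)| ≤ Q ^ (L - 1) := by
        split
        · refine le_trans ((aux_abs_relu _).trans (hpre (l - 1) (by omega) _)) ?_
          exact pow_le_pow_right₀ hQ1 (by omega)
        · simpa using le_trans zero_le_one hP1
      calc |delta L m d (extW L m d W) x l j| *
            |(if h : (c : ℕ) < m then
              relu (preact m d (extW L m d W) x (l - 1) ⟨(c : ℕ), h⟩) else 0)|
          ≤ K * Q ^ (L - 1) := mul_le_mul hd1 hd2 (abs_nonneg _) hK0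
        _ ≤ Real.sqrt m * Q ^ (L - 1) + K * Q ^ (L - 1) + K := by
          have h1 : (0:ℝ) ≤ Real.sqrt m * Q ^ (L - 1) := by positivity
          linarith


lemma aux_gradBound_bddAbove (L m d n : ℕ) (hL : 2 ≤ L) (hm : 1 ≤ m) (hd : 1 ≤ d)
    (X : Fin n → Fin d → ℝ) (hX : ∀ i, ∑ k, (X i k) ^ 2 = 1)
    (W0 : Wts L m d) (τ : ℝ) (hτ : 0 < τ) :
    BddAbove { e : ℝ | ∃ (i : Fin n) (l : Fin L) (W : Wts L m d),
      inBall L m d W0 W τ ∧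
      e = Real.sqrt (layerNormSq L m d (l : ℕ) (gradLayer L m d W (X i) (l : ℕ))) } := by
  obtain ⟨E, hE0, hE⟩ := aux_entry_bound L m d hL hm hd W0 τ hτ
  refine ⟨Real.sqrt ((m : ℝ) * ((m : ℝ) + d) * E ^ 2), ?_⟩
  rintro e ⟨i, l, W, hWb, rfl⟩
  have hx : ∀ k, |X i k| ≤ 1 := by
    intro k
    have h1 : (X i k) ^ 2 ≤ 1 := by
      rw [← hX i]
      exact Finset.single_le_sum (f := fun k' : Fin d => (X i k') ^ 2)
        (fun _ _ => sq_nonneg _) (Finset.mem_univ k)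
    rw [← Real.sqrt_sq_eq_abs]
    calc Real.sqrt ((X i k) ^ 2) ≤ Real.sqrt 1 := Real.sqrt_le_sqrt h1
      _ = 1 := Real.sqrt_one
  exact Real.sqrt_le_sqrt (aux_lns_le L m d (l : ℕ) _ E hE0
    (fun j c => hE W hWb (X i) hx (l : ℕ) l.isLt j c))

lemma aux_sum_ite_comm (p : Prop) [Decidable p] {ι : Type*} (s : Finset ι) (f : ι → ℝ) :
    (if p then ∑ i ∈ s, f i else 0) = ∑ i ∈ s, if p then f i else 0 := by
  split <;> simp

/-- inequality (A.7) in the proof of Lemma 5.1.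
For any `τ > 0` and any `W ∈ B(W0, τ)`:
`Σ_{l=1}^L ‖∇_{W_l} L_S(W)‖_F² ≤ L · M(τ)² · L_S(W)`. -/
theorem loss_gradient_norm_bound
    (L m d n : ℕ) (hL : 2 ≤ L) (hm : 1 ≤ m) (hd : 1 ≤ d) (hn : 1 ≤ n)
    (X : Fin n → Fin d → ℝ) (Y : Fin n → ℝ)
    (hX : ∀ i, ∑ k, (X i k) ^ 2 = 1)
    (hY : ∀ i, Y i = 1 ∨ Y i = -1)
    (W0 W : Wts L m d) (τ : ℝ) (hτ : 0 < τ)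
    (hW : inBall L m d W0 W τ) :
    (∑ l : Fin L, layerNormSq L m d (l : ℕ) (trainLossGrad L m d n X Y W (l : ℕ))) ≤
      (L : ℝ) * gradBound L m d n X W0 τ ^ 2 * trainLoss L m d n X Y W := by
  classical
  have hBdd := aux_gradBound_bddAbove L m d n hL hm hd X hX W0 τ hτ
  set Mb := gradBound L m d n X W0 τ with hMbdef
  have key : ∀ (i : Fin n) (l : Fin L),
      Real.sqrt (layerNormSq L m d (l : ℕ) (gradLayer L m d W (X i) (l : ℕ))) ≤ Mb := by
    intro i l
    exact le_csSup hBdd ⟨i, l, W, hW, rfl⟩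
  have hMb0 : 0 ≤ Mb :=
    le_trans (Real.sqrt_nonneg _) (key ⟨0, by omega⟩ ⟨0, by omega⟩)
  have hlns : ∀ (i : Fin n) (l : Fin L),
      layerNormSq L m d (l : ℕ) (gradLayer L m d W (X i) (l : ℕ)) ≤ Mb ^ 2 := by
    intro i l
    have h0 := aux_lns_nonneg L m d (l : ℕ) (gradLayer L m d W (X i) (l : ℕ))
    calc layerNormSq L m d (l : ℕ) (gradLayer L m d W (X i) (l : ℕ))
        = (Real.sqrt (layerNormSq L m d (l : ℕ) (gradLayer L m d W (X i) (l : ℕ)))) ^ 2 :=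
          (Real.sq_sqrt h0).symm
      _ ≤ Mb ^ 2 := pow_le_pow_left₀ (Real.sqrt_nonneg _) (key i l) 2
  set a : Fin n → ℝ := fun i => negXent' (Y i * netOut L m d W (X i)) with hadef
  have ha0 : ∀ i, 0 ≤ a i := fun i => aux_negXent'_nonneg _
  have ha1 : ∀ i, a i ≤ 1 := fun i => aux_negXent'_le_one _
  have hal : ∀ i, a i ≤ sampleLoss L m d W (X i) (Y i) := by
    intro i
    show negXent' (Y i * netOut L m d W (X i)) ≤ _
    unfold sampleLoss
    exact aux_negXent'_le_xent _
  have hYabs : ∀ i, |Y i| = 1 := by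
    intro i; rcases hY i with h | h <;> rw [h] <;> norm_num
  have habs : ∀ i, |xent' (Y i * netOut L m d W (X i)) * Y i| = a i := by
    intro i
    rw [abs_mul, aux_abs_xent', hYabs i, mul_one]
  set S1 := ∑ i, a i with hS1def
  have hS1nn : 0 ≤ S1 := Finset.sum_nonneg fun i _ => ha0 i
  have hn0 : (0:ℝ) < n := by
    have : (1:ℕ) ≤ n := hn
    exact_mod_cast Nat.lt_of_lt_of_le Nat.zero_lt_one this
  have hA1 : (1 / (n : ℝ)) * S1 ≤ 1 := by
    have h1 : S1 ≤ (n : ℝ) := by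
      calc S1 ≤ ∑ _i : Fin n, (1:ℝ) := Finset.sum_le_sum fun i _ => ha1 i
        _ = (n : ℝ) := by simp
    calc (1 / (n : ℝ)) * S1 ≤ (1 / (n : ℝ)) * (n : ℝ) :=
          mul_le_mul_of_nonneg_left h1 (by positivity)
      _ = 1 := by field_simp
  have hA0 : 0 ≤ (1 / (n : ℝ)) * S1 := by positivity
  have hAL : (1 / (n : ℝ)) * S1 ≤ trainLoss L m d n X Y W := by
    unfold trainLoss
    exact mul_le_mul_of_nonneg_left (Finset.sum_le_sum fun i _ => hal i) (by positivity)
  have hTL0 : 0 ≤ trainLoss L m d n X Y W := le_trans hA0 hAL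
  have hlayer : ∀ l : Fin L,
      layerNormSq L m d (l : ℕ) (trainLossGrad L m d n X Y W (l : ℕ)) ≤
        Mb ^ 2 * trainLoss L m d n X Y W := by
    intro l
    set g : Fin n → Fin m → Fin (m + d) → ℝ := fun i => gradLayer L m d W (X i) (l : ℕ)
      with hgdef
    have hcs : ∀ (j : Fin m) (c : Fin (m + d)),
        (∑ i, sampleLossGrad L m d (X i) (Y i) W (l : ℕ) j c) ^ 2 ≤
          S1 * ∑ i, a i * (g i j c) ^ 2 := by
      intro j c
      have h1 : |∑ i, sampleLossGrad L m d (X i) (Y i) W (l : ℕ) j c| ≤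
          ∑ i, Real.sqrt (a i) * (Real.sqrt (a i) * |g i j c|) := by
        refine (Finset.abs_sum_le_sum_abs _ _).trans
          (le_of_eq (Finset.sum_congr rfl fun i _ => ?_))
        show |xent' (Y i * netOut L m d W (X i)) * Y i * g i j c| =
          Real.sqrt (a i) * (Real.sqrt (a i) * |g i j c|)
        rw [abs_mul, habs i]
        have hrs : Real.sqrt (a i) * (Real.sqrt (a i) * |g i j c|) = a i * |g i j c| := by
          rw [← mul_assoc, Real.mul_self_sqrt (ha0 i)]
        rw [hrs]
      calc (∑ i, sampleLossGrad L m d (X i) (Y i) W (l : ℕ) j c) ^ 2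
          = |∑ i, sampleLossGrad L m d (X i) (Y i) W (l : ℕ) j c| ^ 2 := (sq_abs _).symm
        _ ≤ (∑ i, Real.sqrt (a i) * (Real.sqrt (a i) * |g i j c|)) ^ 2 :=
            pow_le_pow_left₀ (abs_nonneg _) h1 2
        _ ≤ (∑ i, Real.sqrt (a i) ^ 2) * (∑ i, (Real.sqrt (a i) * |g i j c|) ^ 2) :=
            Finset.sum_mul_sq_le_sq_mul_sq _ _ _
        _ = S1 * ∑ i, a i * (g i j c) ^ 2 := by
            congr 1
            · exact Finset.sum_congr rfl fun i _ => Real.sq_sqrt (ha0 i)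
            · exact Finset.sum_congr rfl fun i _ => by
                rw [mul_pow, Real.sq_sqrt (ha0 i), sq_abs]
    have step1 : layerNormSq L m d (l : ℕ) (trainLossGrad L m d n X Y W (l : ℕ)) ≤
        (1 / (n : ℝ)) ^ 2 * (S1 * ∑ i, a i * layerNormSq L m d (l : ℕ) (g i)) := by
      have hmain : layerNormSq L m d (l : ℕ) (trainLossGrad L m d n X Y W (l : ℕ)) ≤
          ∑ j : Fin m, ∑ c : Fin (m + d),
            if (j : ℕ) < rowsOf L m (l : ℕ) ∧ (c : ℕ) < colsOf m d (l : ℕ) then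
              (1 / (n : ℝ)) ^ 2 * (S1 * ∑ i, a i * (g i j c) ^ 2) else 0 := by
        unfold layerNormSq
        apply Finset.sum_le_sum; intro j _
        apply Finset.sum_le_sum; intro c _
        split
        · have he : trainLossGrad L m d n X Y W (l : ℕ) j c =
              (1 / (n : ℝ)) * ∑ i, sampleLossGrad L m d (X i) (Y i) W (l : ℕ) j c := rfl
          rw [he, mul_pow]
          exact mul_le_mul_of_nonneg_left (hcs j c) (by positivity)
        · exact le_rfl
      refine hmain.trans (le_of_eq ?_)
      simp_rw [← mul_ite_zero, ← Finset.mul_sum]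
      congr 1
      congr 1
      calc (∑ j : Fin m, ∑ c : Fin (m + d),
              if (j : ℕ) < rowsOf L m (l : ℕ) ∧ (c : ℕ) < colsOf m d (l : ℕ) then
                ∑ i, a i * (g i j c) ^ 2 else 0)
          = ∑ j : Fin m, ∑ c : Fin (m + d), ∑ i, (if (j : ℕ) < rowsOf L m (l : ℕ) ∧
              (c : ℕ) < colsOf m d (l : ℕ) then a i * (g i j c) ^ 2 else 0) := by
            simp_rw [aux_sum_ite_comm]
        _ = ∑ j : Fin m, ∑ i, ∑ c : Fin (m + d), (if (j : ℕ) < rowsOf L m (l : ℕ) ∧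
              (c : ℕ) < colsOf m d (l : ℕ) then a i * (g i j c) ^ 2 else 0) :=
            Finset.sum_congr rfl fun j _ => Finset.sum_comm
        _ = ∑ i, ∑ j : Fin m, ∑ c : Fin (m + d), (if (j : ℕ) < rowsOf L m (l : ℕ) ∧
              (c : ℕ) < colsOf m d (l : ℕ) then a i * (g i j c) ^ 2 else 0) :=
            Finset.sum_comm
        _ = ∑ i, a i * layerNormSq L m d (l : ℕ) (g i) := by
            refine Finset.sum_congr rfl fun i _ => ?_
            unfold layerNormSq
            simp_rw [← mul_ite_zero, ← Finset.mul_sum]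
    calc layerNormSq L m d (l : ℕ) (trainLossGrad L m d n X Y W (l : ℕ))
        ≤ (1 / (n : ℝ)) ^ 2 * (S1 * ∑ i, a i * layerNormSq L m d (l : ℕ) (g i)) := step1
      _ ≤ (1 / (n : ℝ)) ^ 2 * (S1 * ∑ i, a i * Mb ^ 2) := by
          apply mul_le_mul_of_nonneg_left _ (by positivity)
          apply mul_le_mul_of_nonneg_left _ hS1nn
          exact Finset.sum_le_sum fun i _ => mul_le_mul_of_nonneg_left (hlns i l) (ha0 i)
      _ = ((1 / (n : ℝ)) * S1) * ((1 / (n : ℝ)) * S1) * Mb ^ 2 := by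
          rw [← Finset.sum_mul, ← hS1def]; ring
      _ ≤ 1 * ((1 / (n : ℝ)) * S1) * Mb ^ 2 := by
          apply mul_le_mul_of_nonneg_right _ (sq_nonneg Mb)
          exact mul_le_mul_of_nonneg_right hA1 hA0
      _ = ((1 / (n : ℝ)) * S1) * Mb ^ 2 := by ring
      _ ≤ trainLoss L m d n X Y W * Mb ^ 2 :=
          mul_le_mul_of_nonneg_right hAL (sq_nonneg Mb)
      _ = Mb ^ 2 * trainLoss L m d n X Y W := by ring
  calc (∑ l : Fin L, layerNormSq L m d (l : ℕ) (trainLossGrad L m d n X Y W (l : ℕ)))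
      ≤ ∑ _l : Fin L, Mb ^ 2 * trainLoss L m d n X Y W :=
        Finset.sum_le_sum fun l _ => hlayer l
    _ = (L : ℝ) * (Mb ^ 2 * trainLoss L m d n X Y W) := by
        simp [Finset.sum_const, Finset.card_univ, nsmul_eq_mul]
    _ = (L : ℝ) * Mb ^ 2 * trainLoss L m d n X Y W := by ring
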